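/- In particular, W_a is invertible, with inverse (1/(m_1⋯m_n)) · W_0, when viewed as a matrix over ℚ. -/

import Mathlib

/-!
Both matrices are Kronecker products over the coordinates: the `(g, h)` entry is a product of
`m_i × m_i` factor entries at `(g i, h i)`. Products of Kronecker products are computed factorwise,
so it suffices to check `Ω * M = m • 1` for the single-coordinate factors `Ω x y = 1 - m ω(x, y)`
and `M = μ`. This follows from the column sums `∑ j, μ(j, y) = m [y = 0]` and
`∑ j, ω(x, j) μ(j, y) = [x ≠ 0] μ(x, y)`.
-/

def wronOmega {m : ℕ} [NeZero m] (x y : Fin m) : ℚ :=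
  if x ≠ 0 ∧ x = y then 1 else 0

def wronMu {m : ℕ} [NeZero m] (x y : Fin m) : ℚ :=
  if x = 0 ∨ y = 0 then 1 else if x = y then -1 else 0

def Wa {n : ℕ} (m : Fin n → ℕ) [∀ i, NeZero (m i)] :
    Matrix (∀ i, Fin (m i)) (∀ i, Fin (m i)) ℚ :=
  fun g h => ∏ i, (1 - (m i : ℚ) * wronOmega (g i) (h i))

def W0 {n : ℕ} (m : Fin n → ℕ) [∀ i, NeZero (m i)] :
    Matrix (∀ i, Fin (m i)) (∀ i, Fin (m i)) ℚ :=
  fun g h => ∏ i, wronMu (g i) (h i)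

namespace Matrix

variable {ι R : Type*} [Fintype ι] [CommSemiring R] {α β γ : ι → Type*}

def piKronecker (A : ∀ i, Matrix (α i) (β i) R) : Matrix (∀ i, α i) (∀ i, β i) R :=
  of fun g h => ∏ i, A i (g i) (h i)

@[simp]
theorem piKronecker_apply (A : ∀ i, Matrix (α i) (β i) R) (g : ∀ i, α i) (h : ∀ i, β i) :
    piKronecker A g h = ∏ i, A i (g i) (h i) :=
  rfl

theorem piKronecker_mul [DecidableEq ι] [∀ i, Fintype (β i)]
    (A : ∀ i, Matrix (α i) (β i) R) (B : ∀ i, Matrix (β i) (γ i) R) :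
    piKronecker A * piKronecker B = piKronecker fun i => A i * B i := by
  ext g h
  simp only [mul_apply, piKronecker_apply, ← Finset.prod_mul_distrib, Fintype.prod_sum]

theorem piKronecker_smul (c : ι → R) (A : ∀ i, Matrix (α i) (β i) R) :
    piKronecker (fun i => c i • A i) = (∏ i, c i) • piKronecker A := by
  ext g h
  simp only [piKronecker_apply, smul_apply, smul_eq_mul, Finset.prod_mul_distrib]

theorem piKronecker_one [∀ i, DecidableEq (α i)] :
    piKronecker (fun i => (1 : Matrix (α i) (α i) R)) = 1 := by
  ext g h
  by_cases hgh : g = h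
  · subst hgh
    simp
  · obtain ⟨i, hi⟩ := Function.ne_iff.mp hgh
    rw [piKronecker_apply, one_apply_ne hgh]
    exact Finset.prod_eq_zero (Finset.mem_univ i) (one_apply_ne hi)

end Matrix

open Matrix

section Factor

variable {k : ℕ} [NeZero k]

theorem sum_wronMu_left (y : Fin k) :
    ∑ j, wronMu j y = if y = 0 then (k : ℚ) else 0 := by
  by_cases hy : y = 0
  · simp [wronMu, hy]
  · have hμ : ∀ j, wronMu j y = (if j = 0 then 1 else 0) + (if j = y then -1 else 0) := by
      intro j
      unfold wronMu
      split_ifs <;> simp_all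
    simp [hμ, hy, Finset.sum_add_distrib]

theorem sum_wronOmega_mul_wronMu (x y : Fin k) :
    ∑ j, wronOmega x j * wronMu j y = if x = 0 then 0 else wronMu x y := by
  by_cases hx : x = 0
  · simp [wronOmega, hx]
  · have hω : ∀ j, wronOmega x j = if x = j then 1 else 0 := by
      simp [wronOmega, hx]
    simp [hω, hx]

theorem wronOmega_factor_mul_wronMu :
    (of fun x y : Fin k => 1 - (k : ℚ) * wronOmega x y) * of wronMu = (k : ℚ) • 1 := by
  ext x y
  simp only [mul_apply, of_apply, sub_mul, one_mul, mul_assoc, Finset.sum_sub_distrib,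
    ← Finset.mul_sum, sum_wronMu_left, sum_wronOmega_mul_wronMu, Matrix.smul_apply, smul_eq_mul]
  by_cases hx : x = 0
  · subst hx
    simp [one_apply, eq_comm]
  · by_cases hy : y = 0 <;> by_cases hxy : x = y <;> simp_all [wronMu, one_apply]

end Factor

theorem Wa_eq_piKronecker {n : ℕ} (m : Fin n → ℕ) [∀ i, NeZero (m i)] :
    Wa m = piKronecker fun i => of fun x y : Fin (m i) => 1 - (m i : ℚ) * wronOmega x y :=
  rfl

theorem W0_eq_piKronecker {n : ℕ} (m : Fin n → ℕ) [∀ i, NeZero (m i)] :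
    W0 m = piKronecker fun i => of (wronMu (m := m i)) :=
  rfl

theorem Wa_mul_W0 {n : ℕ} (m : Fin n → ℕ) [∀ i, NeZero (m i)] :
    Wa m * W0 m = ((∏ i, m i : ℕ) : ℚ) • 1 := by
  rw [Wa_eq_piKronecker, W0_eq_piKronecker, piKronecker_mul]
  simp only [wronOmega_factor_mul_wronMu, piKronecker_smul, piKronecker_one, Nat.cast_prod]

theorem Wa_invertible {n : ℕ} (m : Fin n → ℕ) [∀ i, NeZero (m i)] :
    IsUnit (Wa m) ∧ (Wa m)⁻¹ = ((∏ i, m i : ℕ) : ℚ)⁻¹ • W0 m := by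
  have hm : ((∏ i, m i : ℕ) : ℚ) ≠ 0 := by
    simpa [Finset.prod_eq_zero_iff] using fun i => NeZero.ne (m i)
  have hinv : Wa m * (((∏ i, m i : ℕ) : ℚ)⁻¹ • W0 m) = 1 := by
    rw [Matrix.mul_smul, Wa_mul_W0, smul_smul, inv_mul_cancel₀ hm, one_smul]
  exact ⟨(isUnit_iff_isUnit_det _).mpr (isUnit_det_of_right_inverse hinv), inv_eq_right_inv hinv⟩
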